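/- The shift map σ : ω* → ω* and its inverse σ⁻¹ are both chain transitive. -/

import Mathlib

open Set TopologicalSpace

noncomputable section

/-- `ω*`, the Stone–Čech remainder `βω ∖ ω`: the space of free (non-principal)
ultrafilters on `ℕ`, as a subspace of `βℕ = Ultrafilter ℕ` (whose topology is
generated by the clopen sets `A* = {u : A ∈ u}` for `A ⊆ ℕ`). -/
abbrev NStar : Type := {u : Ultrafilter ℕ // ∀ n : ℕ, u ≠ pure n}

lemma free_map_add (u : NStar) : ∀ n : ℕ, Ultrafilter.map (· + 1) u.1 ≠ pure n := by
  intro n hn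
  have h1 : (· + 1) ⁻¹' {n} ∈ u.1 := by
    have : {n} ∈ Ultrafilter.map (· + 1) u.1 := by
      rw [hn]; exact Ultrafilter.mem_pure.mpr rfl
    exact this
  have hfin : ((· + 1) ⁻¹' {n} : Set ℕ).Finite := by
    apply Set.Finite.subset (Set.finite_singleton (n - 1))
    intro x hx
    simp only [Set.mem_preimage, Set.mem_singleton_iff] at hx ⊢
    omega
  obtain ⟨x, -, hx⟩ := Ultrafilter.eq_pure_of_finite_mem hfin h1
  exact u.2 x hx

lemma free_map_sub (u : NStar) : ∀ n : ℕ, Ultrafilter.map (· - 1) u.1 ≠ pure n := by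
  intro n hn
  have h1 : (· - 1) ⁻¹' {n} ∈ u.1 := by
    have : {n} ∈ Ultrafilter.map (· - 1) u.1 := by
      rw [hn]; exact Ultrafilter.mem_pure.mpr rfl
    exact this
  have hfin : ((· - 1) ⁻¹' {n} : Set ℕ).Finite := by
    apply Set.Finite.subset (Set.toFinite {0, 1, n + 1})
    intro x hx
    simp only [Set.mem_preimage, Set.mem_singleton_iff] at hx
    simp only [Set.mem_insert_iff, Set.mem_singleton_iff]
    omega
  obtain ⟨x, -, hx⟩ := Ultrafilter.eq_pure_of_finite_mem hfin h1
  exact u.2 x hx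

lemma ucofinite (u : NStar) : (u.1 : Filter ℕ) ≤ Filter.cofinite := by
  rcases u.1.le_cofinite_or_eq_pure with h | ⟨a, ha⟩
  · exact h
  · exact absurd ha (u.2 a)

lemma left_inv_aux (u : NStar) :
    Ultrafilter.map (· - 1) (Ultrafilter.map (· + 1) u.1) = u.1 := by
  apply Ultrafilter.coe_injective
  rw [Ultrafilter.coe_map, Ultrafilter.coe_map, Filter.map_map]
  have : ((· - 1) ∘ (· + 1) : ℕ → ℕ) = id := by funext x; simp
  rw [this, Filter.map_id]

lemma right_inv_aux (u : NStar) :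
    Ultrafilter.map (· + 1) (Ultrafilter.map (· - 1) u.1) = u.1 := by
  apply Ultrafilter.coe_injective
  rw [Ultrafilter.coe_map, Ultrafilter.coe_map, Filter.map_map]
  have h1 : ((· + 1) ∘ (· - 1) : ℕ → ℕ) =ᶠ[(u.1 : Filter ℕ)] id := by
    apply ucofinite u
    have : {x : ℕ | ¬ ((· + 1) ∘ (· - 1) : ℕ → ℕ) x = id x} ⊆ {0} := by
      intro x hx
      simp only [Function.comp_apply, id_eq, Set.mem_setOf_eq] at hx
      simp only [Set.mem_singleton_iff]
      omega
    exact Set.Finite.subset (Set.finite_singleton 0) this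
  calc Filter.map ((· + 1) ∘ (· - 1)) (u.1 : Filter ℕ)
      = Filter.map id (u.1 : Filter ℕ) := Filter.map_congr h1
    _ = (u.1 : Filter ℕ) := Filter.map_id

lemma continuous_umap (m : ℕ → ℕ) :
    Continuous (Ultrafilter.map m : Ultrafilter ℕ → Ultrafilter ℕ) := by
  rw [ultrafilterBasis_is_basis.continuous_iff]
  rintro _ ⟨s, rfl⟩
  exact ultrafilter_isOpen_basic (m ⁻¹' s)

/-- The shift map on `ω*`: it sends `u` to the ultrafilter generated by
`{A + 1 : A ∈ u}`, i.e. the image ultrafilter of `u` under `n ↦ n + 1`. -/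
def shiftF (u : NStar) : NStar := ⟨Ultrafilter.map (· + 1) u.1, free_map_add u⟩

/-- The inverse of the shift map on `ω*`, induced by the predecessor function. -/
def shiftInvF (u : NStar) : NStar := ⟨Ultrafilter.map (· - 1) u.1, free_map_sub u⟩

/-- The shift map `σ : ω* → ω*` as a self-homeomorphism of `ω*`. -/
def sigmaShift : NStar ≃ₜ NStar :=
  { toFun := shiftF
    invFun := shiftInvF
    left_inv := fun u => Subtype.ext (left_inv_aux u)
    right_inv := fun u => Subtype.ext (right_inv_aux u)
    continuous_toFun :=
      Continuous.subtype_mk ((continuous_umap (· + 1)).comp continuous_subtype_val) _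
    continuous_invFun :=
      Continuous.subtype_mk ((continuous_umap (· - 1)).comp continuous_subtype_val) _ }

/-- `f` and `g` are isomorphic dynamical systems on `ω*`: there is `h ∈ H(ω*)`
with `h ∘ f = g ∘ h`. -/
def Isomorphic (f g : NStar ≃ₜ NStar) : Prop :=
  ∃ h : NStar ≃ₜ NStar, ∀ u, h (f u) = g (h u)

/-- `Iso(σ)`: the set of members of `H(ω*)` isomorphic to the shift map `σ`. -/
def IsoSigma : Set (NStar ≃ₜ NStar) := {h | Isomorphic h sigmaShift}

/-- `Iso(σ⁻¹)`: the set of members of `H(ω*)` isomorphic to `σ⁻¹`. -/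
def IsoSigmaInv : Set (NStar ≃ₜ NStar) := {h | Isomorphic h sigmaShift.symm}

/-- The compact-open topology on the group `H(X)` of self-homeomorphisms of `X`,
generated by the sets `V(K,U) = {h : h[K] ⊆ U}` for `K` compact and `U` open. -/
instance homeoCO {X : Type*} [TopologicalSpace X] : TopologicalSpace (X ≃ₜ X) :=
  TopologicalSpace.generateFrom
    {S : Set (X ≃ₜ X) | ∃ K U : Set X, IsCompact K ∧ IsOpen U ∧
      S = {h : X ≃ₜ X | ∀ x ∈ K, h x ∈ U}}

/-- `h` is chain transitive: for all points `a, b` and every open cover `𝒰` of the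
space, there is a `𝒰`-chain `x_0 = a, x_1, …, x_n = b` (with `n ≥ 1`), i.e. for
each `i < n` there is `U ∈ 𝒰` with `h(x_i) ∈ U` and `x_{i+1} ∈ U`. -/
def ChainTransitive {X : Type*} [TopologicalSpace X] (h : X → X) : Prop :=
  ∀ a b : X, ∀ 𝒰 : Set (Set X), (∀ U ∈ 𝒰, IsOpen U) → ⋃₀ 𝒰 = univ →
    ∃ n : ℕ, 1 ≤ n ∧ ∃ x : ℕ → X, x 0 = a ∧ x n = b ∧
      ∀ i < n, ∃ U ∈ 𝒰, h (x i) ∈ U ∧ x (i + 1) ∈ U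

/-!
The points reachable from `a` by `𝒰`-chains form an open set `R` with `closure (h '' R) ⊆ R`, so a
map is chain transitive as soon as every nonempty open set with this property is the whole space.
For the shift, compactness of `ω*` yields a basic clopen set `A*` with `closure (σ '' R) ⊆ A* ⊆ R`.
Then `σ(A*) ⊆ A*`, so all but finitely many `m ∈ A` have `m + 1 ∈ A`; as `A` is infinite, it is
cofinite and `A* = ω*`. Reversing chains transfers chain transitivity from `σ` to `σ⁻¹`.
-/

def CoverStep {X : Type*} (h : X → X) (𝒰 : Set (Set X)) (x y : X) : Prop :=
  ∃ U ∈ 𝒰, h x ∈ U ∧ y ∈ U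

theorem Relation.transGen_iff_exists_seq {α : Type*} {r : α → α → Prop} {a b : α} :
    Relation.TransGen r a b ↔
      ∃ n : ℕ, 1 ≤ n ∧ ∃ x : ℕ → α, x 0 = a ∧ x n = b ∧ ∀ i < n, r (x i) (x (i + 1)) := by
  constructor
  · intro hab
    induction hab with
    | single hab => exact ⟨1, le_rfl, fun i => if i = 0 then a else _, rfl, rfl, by simpa⟩
    | @tail b c _ hbc ih =>
      obtain ⟨n, hn, x, hx0, hxn, hx⟩ := ih
      refine ⟨n + 1, by omega, fun i => if i ≤ n then x i else c, by simpa, by simp, ?_⟩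
      intro i hi
      rcases Nat.lt_or_ge i n with hin | hin
      · simpa [hin.le, Nat.succ_le_of_lt hin] using hx i hin
      · obtain rfl : i = n := by omega
        simpa [hxn] using hbc
  · rintro ⟨n, hn, x, rfl, rfl, hx⟩
    induction n, hn using Nat.le_induction with
    | base => exact .single (hx 0 one_pos)
    | succ n _ ih =>
      exact .tail (ih fun i hi => hx i (by omega)) (hx n (by omega))

section ChainTransitive

variable {X : Type*} [TopologicalSpace X]

theorem chainTransitive_iff_transGen {h : X → X} :
    ChainTransitive h ↔ ∀ a b : X, ∀ 𝒰 : Set (Set X), (∀ U ∈ 𝒰, IsOpen U) → ⋃₀ 𝒰 = univ →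
      Relation.TransGen (CoverStep h 𝒰) a b := by
  simp only [ChainTransitive, Relation.transGen_iff_exists_seq, CoverStep]

theorem ChainTransitive.symm {h : X ≃ₜ X} (hh : ChainTransitive h) :
    ChainTransitive h.symm := by
  rw [chainTransitive_iff_transGen] at hh ⊢
  intro a b 𝒱 h𝒱 h𝒱cov
  have hcov : ⋃₀ ((h.symm ⁻¹' ·) '' 𝒱) = univ := by
    rw [sUnion_image, ← preimage_iUnion₂, ← sUnion_eq_biUnion, h𝒱cov, preimage_univ]
  have hopen : ∀ U ∈ (h.symm ⁻¹' ·) '' 𝒱, IsOpen U := by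
    rintro _ ⟨V, hV, rfl⟩
    exact (h𝒱 V hV).preimage h.symm.continuous
  refine Relation.TransGen.mono ?_ _ _ (Relation.transGen_swap.mpr (hh b a _ hopen hcov))
  rintro x y ⟨_, ⟨V, hV, rfl⟩, hyV, hxV⟩
  exact ⟨V, hV, hxV, by simpa using hyV⟩

theorem chainTransitive_of_closure_image_subset {h : X → X}
    (H : ∀ R : Set X, IsOpen R → R.Nonempty → closure (h '' R) ⊆ R → R = univ) :
    ChainTransitive h := by
  rw [chainTransitive_iff_transGen]
  intro a b 𝒰 h𝒰 h𝒰cov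
  have hmem (y : X) : ∃ U ∈ 𝒰, y ∈ U := mem_sUnion.mp (h𝒰cov ▸ mem_univ y)
  set R := {y | Relation.TransGen (CoverStep h 𝒰) a y}
  suffices hR : R = univ from (hR ▸ mem_univ b : b ∈ R)
  apply H
  · refine isOpen_iff_forall_mem_open.mpr fun y hy => ?_
    obtain ⟨z, hz, U, hU, hzU, hyU⟩ := Relation.TransGen.tail'_iff.mp hy
    exact ⟨U, fun w hw => Relation.TransGen.tail'_iff.mpr ⟨z, hz, U, hU, hzU, hw⟩, h𝒰 U hU, hyU⟩
  · obtain ⟨U, hU, haU⟩ := hmem (h a)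
    exact ⟨h a, .single ⟨U, hU, haU, haU⟩⟩
  · intro y hy
    obtain ⟨U, hU, hyU⟩ := hmem y
    obtain ⟨_, hzU, z, hz, rfl⟩ := mem_closure_iff.mp hy U (h𝒰 U hU) hyU
    exact hz.tail ⟨U, hU, hzU, hyU⟩

end ChainTransitive

theorem Ultrafilter.ne_pure_iff_compl_singleton_mem {α : Type*} {u : Ultrafilter α} {a : α} :
    u ≠ pure a ↔ ({a}ᶜ : Set α) ∈ u := by
  rw [Ultrafilter.compl_mem_iff_notMem, not_iff_not]
  refine ⟨fun hu => hu ▸ rfl, fun ha => ?_⟩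
  obtain ⟨_, rfl, hu⟩ := Ultrafilter.eq_pure_of_finite_mem (finite_singleton a) ha
  exact hu

theorem Set.Infinite.finite_compl_of_finite_succ_notMem {A : Set ℕ} (hA : A.Infinite)
    (hsucc : {m ∈ A | m + 1 ∉ A}.Finite) : Aᶜ.Finite := by
  obtain ⟨M, hM⟩ := hsucc.bddAbove
  obtain ⟨m₀, hm₀A, hm₀⟩ := hA.exists_gt M
  have hge : ∀ n, m₀ ≤ n → n ∈ A := fun n hn => by
    induction n, hn using Nat.le_induction with
    | base => exact hm₀A
    | succ n hn hnA =>
      by_contra h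
      have := hM ⟨hnA, h⟩
      omega
  exact (finite_Iio m₀).subset fun n hn => not_le.mp fun h => hn (hge n h)

namespace NStar

/-- The basic clopen set `A*`. -/
def basic (A : Set ℕ) : Set NStar := {u | A ∈ u.1}

theorem isOpen_basic (A : Set ℕ) : IsOpen (basic A) :=
  (ultrafilter_isOpen_basic A).preimage continuous_subtype_val

theorem le_cofinite (u : NStar) : (u.1 : Filter ℕ) ≤ Filter.cofinite :=
  u.1.le_cofinite_or_eq_pure.resolve_right fun ⟨n, hn⟩ => u.2 n hn

theorem infinite_of_mem {u : NStar} {A : Set ℕ} (hA : A ∈ u.1) : A.Infinite := fun hfin =>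
  Ultrafilter.compl_mem_iff_notMem.mp (u.le_cofinite hfin.compl_mem_cofinite) hA

theorem mem_of_finite_compl (u : NStar) {A : Set ℕ} (hA : Aᶜ.Finite) : A ∈ u.1 :=
  u.le_cofinite (Filter.mem_cofinite.mpr hA)

theorem _root_.Set.Infinite.exists_nstar_mem {A : Set ℕ} (hA : A.Infinite) :
    ∃ u : NStar, A ∈ u.1 := by
  have := hA.cofinite_inf_principal_neBot
  have hF := Ultrafilter.of_le (Filter.cofinite ⊓ Filter.principal A)
  refine ⟨⟨Ultrafilter.of _, fun n hn => ?_⟩, hF.trans inf_le_right (Filter.mem_principal_self A)⟩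
  have hn' := hF.trans inf_le_left (finite_singleton n).compl_mem_cofinite
  rw [hn] at hn'
  exact hn' rfl

instance : CompactSpace NStar := by
  have : IsClosed {u : Ultrafilter ℕ | ∀ n : ℕ, u ≠ pure n} := by
    simp only [Ultrafilter.ne_pure_iff_compl_singleton_mem, ofPred_forall]
    exact isClosed_iInter fun n => ultrafilter_isClosed_basic _
  exact isCompact_iff_compactSpace.mp this.isCompact

theorem exists_mem_basic_subset {U : Set NStar} (hU : IsOpen U) {u : NStar} (hu : u ∈ U) :
    ∃ A ∈ u.1, basic A ⊆ U := by
  obtain ⟨V, hV, rfl⟩ := isOpen_induced_iff.mp hU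
  obtain ⟨_, ⟨A, rfl⟩, huA, hAV⟩ := ultrafilterBasis_is_basis.exists_subset_of_mem_open hu hV
  exact ⟨A, huA, fun v hv => hAV hv⟩

theorem exists_basic_between {K U : Set NStar} (hK : IsCompact K) (hU : IsOpen U)
    (hKU : K ⊆ U) : ∃ A, K ⊆ basic A ∧ basic A ⊆ U := by
  choose! B hB hBU using fun u (hu : u ∈ U) => exists_mem_basic_subset hU hu
  obtain ⟨t, htK, ht, hKt⟩ := hK.elim_finite_subcover_image (b := K) (c := basic ∘ B)
    (fun _ _ => isOpen_basic _) fun u hu => mem_biUnion hu (hB u (hKU hu))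
  refine ⟨⋃ u ∈ t, B u, fun v hv => ?_, fun v hv => ?_⟩
  · obtain ⟨u, hut, hv⟩ := mem_iUnion₂.mp (hKt hv)
    exact Filter.mem_of_superset hv (subset_biUnion_of_mem hut)
  · obtain ⟨u, hut, hv⟩ := (Ultrafilter.finite_biUnion_mem_iff ht).mp hv
    exact hBU u (hKU (htK hut)) hv

theorem basic_eq_univ_of_shift_image_subset {A : Set ℕ} (hA : (basic A).Nonempty)
    (hσ : sigmaShift '' basic A ⊆ basic A) : basic A = univ := by
  obtain ⟨u, hu⟩ := hA
  have hsucc : {m ∈ A | m + 1 ∉ A}.Finite := by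
    by_contra hinf
    obtain ⟨v, hv⟩ := Set.Infinite.exists_nstar_mem hinf
    have hvA : (· + 1) ⁻¹' A ∈ v.1 := hσ ⟨v, Filter.mem_of_superset hv fun _ hm => hm.1, rfl⟩
    obtain ⟨m, ⟨-, hm⟩, hm'⟩ := v.1.nonempty_of_mem (Filter.inter_mem hv hvA)
    exact hm hm'
  have hAc := (infinite_of_mem hu).finite_compl_of_finite_succ_notMem hsucc
  exact eq_univ_of_forall fun v => v.mem_of_finite_compl hAc

theorem eq_univ_of_closure_shift_image_subset {R : Set NStar} (hR : IsOpen R)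
    (hne : R.Nonempty) (hcl : closure (sigmaShift '' R) ⊆ R) : R = univ := by
  obtain ⟨A, hKA, hAR⟩ := exists_basic_between isClosed_closure.isCompact hR hcl
  have hRA : sigmaShift '' R ⊆ basic A := subset_closure.trans hKA
  have hA : basic A = univ := basic_eq_univ_of_shift_image_subset
    ((hne.image _).mono hRA) ((image_mono hAR).trans hRA)
  exact eq_univ_of_univ_subset (hA ▸ hAR)

end NStar

/-- The shift map `σ : ω* → ω*` and its inverse `σ⁻¹` are both chain transitive. -/
theorem stmt_10 :
    ChainTransitive (⇑sigmaShift) ∧ ChainTransitive (⇑sigmaShift.symm) := by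
  have hσ : ChainTransitive sigmaShift :=
    chainTransitive_of_closure_image_subset fun _ => NStar.eq_univ_of_closure_shift_image_subset
  exact ⟨hσ, hσ.symm⟩
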